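/- arXiv:1412.1562 — 3 statements merged into one kernel-verified Lean document; each statement's English description precedes it below -/
import Mathlib

section
/- Let ψ, φ : ℝ³ → ℂ be smooth and satisfy both the coupled NLS system (i ψ_z + ψ_xx − 2ψ²φ = 0, i φ_z − φ_xx + 2ψφ² = 0) and the coupled mKdV system (ψ_t + ψ_xxx − 6ψφψ_x = 0, φ_t + φ_xxx − 6ψφφ_x = 0). Then u := −2ψφ satisfies the KP-I equation 3 u_zz = (4 u_t + u_xxx + 6 u u_x)_x. -/
open Complex

/-- Partial derivative in the first variable (x). -/
noncomputable def px (f : ℝ → ℝ → ℝ → ℂ) (x z t : ℝ) : ℂ :=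
  deriv (fun x' => f x' z t) x

/-- Partial derivative in the second variable (z). -/
noncomputable def pz (f : ℝ → ℝ → ℝ → ℂ) (x z t : ℝ) : ℂ :=
  deriv (fun z' => f x z' t) z

/-- Partial derivative in the third variable (t). -/
noncomputable def pt (f : ℝ → ℝ → ℝ → ℂ) (x z t : ℝ) : ℂ :=
  deriv (fun t' => f x z t') t

abbrev Sm (f : ℝ → ℝ → ℝ → ℂ) : Prop :=
  ContDiff ℝ (⊤ : ℕ∞) (fun p : ℝ × ℝ × ℝ => f p.1 p.2.1 p.2.2)

lemma hasDerivAt_slice_x {f : ℝ → ℝ → ℝ → ℂ} (hf : Sm f) (x z t : ℝ) :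
    HasDerivAt (fun x' => f x' z t) (px f x z t) x := by
  have h1 : DifferentiableAt ℝ (fun p : ℝ × ℝ × ℝ => f p.1 p.2.1 p.2.2) (x, z, t) :=
    (hf.differentiable (by simp)).differentiableAt
  have h2 : DifferentiableAt ℝ (fun x' : ℝ => ((x', z, t) : ℝ × ℝ × ℝ)) x := by fun_prop
  have h3 : DifferentiableAt ℝ (fun x' => f x' z t) x := DifferentiableAt.comp (g := fun p : ℝ × ℝ × ℝ => f p.1 p.2.1 p.2.2) x h1 h2
  simpa [px] using h3.hasDerivAt

lemma hasDerivAt_slice_z {f : ℝ → ℝ → ℝ → ℂ} (hf : Sm f) (x z t : ℝ) :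
    HasDerivAt (fun z' => f x z' t) (pz f x z t) z := by
  have h1 : DifferentiableAt ℝ (fun p : ℝ × ℝ × ℝ => f p.1 p.2.1 p.2.2) (x, z, t) :=
    (hf.differentiable (by simp)).differentiableAt
  have h2 : DifferentiableAt ℝ (fun z' : ℝ => ((x, z', t) : ℝ × ℝ × ℝ)) z := by fun_prop
  have h3 : DifferentiableAt ℝ (fun z' => f x z' t) z := DifferentiableAt.comp (g := fun p : ℝ × ℝ × ℝ => f p.1 p.2.1 p.2.2) z h1 h2
  simpa [pz] using h3.hasDerivAt

lemma hasDerivAt_slice_t {f : ℝ → ℝ → ℝ → ℂ} (hf : Sm f) (x z t : ℝ) :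
    HasDerivAt (fun t' => f x z t') (pt f x z t) t := by
  have h1 : DifferentiableAt ℝ (fun p : ℝ × ℝ × ℝ => f p.1 p.2.1 p.2.2) (x, z, t) :=
    (hf.differentiable (by simp)).differentiableAt
  have h2 : DifferentiableAt ℝ (fun t' : ℝ => ((x, z, t') : ℝ × ℝ × ℝ)) t := by fun_prop
  have h3 : DifferentiableAt ℝ (fun t' => f x z t') t := DifferentiableAt.comp (g := fun p : ℝ × ℝ × ℝ => f p.1 p.2.1 p.2.2) t h1 h2
  simpa [pt] using h3.hasDerivAt

lemma px_eq_fderiv {f : ℝ → ℝ → ℝ → ℂ} (hf : Sm f) (x z t : ℝ) :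
    px f x z t = fderiv ℝ (fun p : ℝ × ℝ × ℝ => f p.1 p.2.1 p.2.2) (x, z, t) (1, 0, 0) := by
  have hF : HasFDerivAt (fun p : ℝ × ℝ × ℝ => f p.1 p.2.1 p.2.2)
      (fderiv ℝ (fun p : ℝ × ℝ × ℝ => f p.1 p.2.1 p.2.2) (x, z, t)) (x, z, t) :=
    ((hf.differentiable (by simp)) (x, z, t)).hasFDerivAt
  have hline : HasDerivAt (fun x' : ℝ => ((x', z, t) : ℝ × ℝ × ℝ)) (1, 0, 0) x := by
    exact (hasDerivAt_id x).prodMk (hasDerivAt_const x ((z, t) : ℝ × ℝ))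
  have h := hF.comp_hasDerivAt x hline
  unfold px
  exact h.deriv

lemma pz_eq_fderiv {f : ℝ → ℝ → ℝ → ℂ} (hf : Sm f) (x z t : ℝ) :
    pz f x z t = fderiv ℝ (fun p : ℝ × ℝ × ℝ => f p.1 p.2.1 p.2.2) (x, z, t) (0, 1, 0) := by
  have hF : HasFDerivAt (fun p : ℝ × ℝ × ℝ => f p.1 p.2.1 p.2.2)
      (fderiv ℝ (fun p : ℝ × ℝ × ℝ => f p.1 p.2.1 p.2.2) (x, z, t)) (x, z, t) :=
    ((hf.differentiable (by simp)) (x, z, t)).hasFDerivAt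
  have hline : HasDerivAt (fun z' : ℝ => ((x, z', t) : ℝ × ℝ × ℝ)) (0, 1, 0) z := by
    simpa using (hasDerivAt_const z x).prodMk ((hasDerivAt_id z).prodMk (hasDerivAt_const z t))
  have h := hF.comp_hasDerivAt z hline
  unfold pz
  exact h.deriv

lemma Sm.px' {f : ℝ → ℝ → ℝ → ℂ} (hf : Sm f) : Sm (px f) := by
  have h : ContDiff ℝ (⊤ : ℕ∞) (fun p : ℝ × ℝ × ℝ =>
      fderiv ℝ (fun q : ℝ × ℝ × ℝ => f q.1 q.2.1 q.2.2) p (1, 0, 0)) :=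
    (hf.fderiv_right (by simp)).clm_apply contDiff_const
  have he : (fun p : ℝ × ℝ × ℝ => px f p.1 p.2.1 p.2.2) = fun p : ℝ × ℝ × ℝ =>
      fderiv ℝ (fun q : ℝ × ℝ × ℝ => f q.1 q.2.1 q.2.2) p (1, 0, 0) := by
    funext p
    obtain ⟨a, b, c⟩ := p
    exact px_eq_fderiv hf a b c
  show ContDiff ℝ (⊤ : ℕ∞) (fun p : ℝ × ℝ × ℝ => px f p.1 p.2.1 p.2.2)
  rw [he]; exact h

lemma pz_px_swap {f : ℝ → ℝ → ℝ → ℂ} (hf : Sm f) (x z t : ℝ) :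
    pz (px f) x z t = px (pz f) x z t := by
  set F : ℝ × ℝ × ℝ → ℂ := fun p => f p.1 p.2.1 p.2.2 with hFdef
  have hdF : Differentiable ℝ F := hf.differentiable (by simp)
  have hF1 : ContDiff ℝ (⊤ : ℕ∞) (fderiv ℝ F) := hf.fderiv_right (by simp)
  have hF2 : HasFDerivAt (fderiv ℝ F) (fderiv ℝ (fderiv ℝ F) (x, z, t)) (x, z, t) :=
    ((hF1.differentiable (by simp)) (x, z, t)).hasFDerivAt
  have hsymm := second_derivative_symmetric (f' := fderiv ℝ F)
    (fun y => (hdF y).hasFDerivAt) hF2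
  have lineX : HasDerivAt (fun x' : ℝ => ((x', z, t) : ℝ × ℝ × ℝ)) (1, 0, 0) x := by
    exact (hasDerivAt_id x).prodMk (hasDerivAt_const x ((z, t) : ℝ × ℝ))
  have lineZ : HasDerivAt (fun z' : ℝ => ((x, z', t) : ℝ × ℝ × ℝ)) (0, 1, 0) z := by
    simpa using (hasDerivAt_const z x).prodMk ((hasDerivAt_id z).prodMk (hasDerivAt_const z t))
  have c1 : pz (px f) x z t = fderiv ℝ (fderiv ℝ F) (x, z, t) (0, 1, 0) (1, 0, 0) := by
    have hcomp : HasFDerivAt (fun q : ℝ × ℝ × ℝ => fderiv ℝ F q (1, 0, 0))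
        ((ContinuousLinearMap.apply ℝ ℂ ((1 : ℝ), (0 : ℝ), (0 : ℝ))).comp
          (fderiv ℝ (fderiv ℝ F) (x, z, t))) (x, z, t) :=
      (ContinuousLinearMap.apply ℝ ℂ ((1 : ℝ), (0 : ℝ), (0 : ℝ))).hasFDerivAt.comp
        (x, z, t) hF2
    have hz' : HasDerivAt (fun z' => fderiv ℝ F (x, z', t) (1, 0, 0))
        (fderiv ℝ (fderiv ℝ F) (x, z, t) (0, 1, 0) (1, 0, 0)) z := by
      exact hcomp.comp_hasDerivAt z lineZ
    have hc : pz (px f) x z t = deriv (fun z' => fderiv ℝ F (x, z', t) (1, 0, 0)) z := by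
      unfold pz; congr 1; funext z'; exact px_eq_fderiv hf x z' t
    rw [hc, hz'.deriv]
  have c2 : px (pz f) x z t = fderiv ℝ (fderiv ℝ F) (x, z, t) (1, 0, 0) (0, 1, 0) := by
    have hcomp : HasFDerivAt (fun q : ℝ × ℝ × ℝ => fderiv ℝ F q (0, 1, 0))
        ((ContinuousLinearMap.apply ℝ ℂ ((0 : ℝ), (1 : ℝ), (0 : ℝ))).comp
          (fderiv ℝ (fderiv ℝ F) (x, z, t))) (x, z, t) :=
      (ContinuousLinearMap.apply ℝ ℂ ((0 : ℝ), (1 : ℝ), (0 : ℝ))).hasFDerivAt.comp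
        (x, z, t) hF2
    have hx' : HasDerivAt (fun x' => fderiv ℝ F (x', z, t) (0, 1, 0))
        (fderiv ℝ (fderiv ℝ F) (x, z, t) (1, 0, 0) (0, 1, 0)) x := by
      exact hcomp.comp_hasDerivAt x lineX
    have hc : px (pz f) x z t = deriv (fun x' => fderiv ℝ F (x', z, t) (0, 1, 0)) x := by
      unfold px; congr 1; funext x'; exact pz_eq_fderiv hf x' z t
    rw [hc, hx'.deriv]
  rw [c1, c2, hsymm (0, 1, 0) (1, 0, 0)]

lemma px_congr {f g : ℝ → ℝ → ℝ → ℂ} (h : ∀ x z t, f x z t = g x z t) (x z t : ℝ) :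
    px f x z t = px g x z t := by
  unfold px; congr 1; funext x'; exact h x' z t
lemma pz_congr {f g : ℝ → ℝ → ℝ → ℂ} (h : ∀ x z t, f x z t = g x z t) (x z t : ℝ) :
    pz f x z t = pz g x z t := by
  unfold pz; congr 1; funext z'; exact h x z' t
lemma pt_congr {f g : ℝ → ℝ → ℝ → ℂ} (h : ∀ x z t, f x z t = g x z t) (x z t : ℝ) :
    pt f x z t = pt g x z t := by
  unfold pt; congr 1; funext t'; exact h x z t'

theorem kp1_from_coupled_nls_mkdv
    (ψ φ : ℝ → ℝ → ℝ → ℂ)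
    (hψ : ContDiff ℝ (⊤ : ℕ∞) (fun p : ℝ × ℝ × ℝ => ψ p.1 p.2.1 p.2.2))
    (hφ : ContDiff ℝ (⊤ : ℕ∞) (fun p : ℝ × ℝ × ℝ => φ p.1 p.2.1 p.2.2))
    (hnls1 : ∀ x z t, I * pz ψ x z t + px (px ψ) x z t
      - 2 * (ψ x z t)^2 * φ x z t = 0)
    (hnls2 : ∀ x z t, I * pz φ x z t - px (px φ) x z t
      + 2 * ψ x z t * (φ x z t)^2 = 0)
    (hmkdv1 : ∀ x z t, pt ψ x z t + px (px (px ψ)) x z t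
      - 6 * ψ x z t * φ x z t * px ψ x z t = 0)
    (hmkdv2 : ∀ x z t, pt φ x z t + px (px (px φ)) x z t
      - 6 * ψ x z t * φ x z t * px φ x z t = 0)
    (u : ℝ → ℝ → ℝ → ℂ)
    (hu : ∀ x z t, u x z t = -2 * ψ x z t * φ x z t) :
    ∀ x z t, 3 * pz (pz u) x z t =
      px (fun x z t => 4 * pt u x z t + px (px (px u)) x z t
        + 6 * u x z t * px u x z t) x z t := by
  have Sψ1 : Sm (px ψ) := Sm.px' hψ
  have Sψ2 : Sm (px (px ψ)) := Sm.px' Sψ1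
  have Sψ3 : Sm (px (px (px ψ))) := Sm.px' Sψ2
  have Sφ1 : Sm (px φ) := Sm.px' hφ
  have Sφ2 : Sm (px (px φ)) := Sm.px' Sφ1
  have Sφ3 : Sm (px (px (px φ))) := Sm.px' Sφ2
  -- z-derivatives from NLS
  have hzψ : ∀ x z t, pz ψ x z t
      = I * (px (px ψ) x z t - 2 * (ψ x z t * ψ x z t * φ x z t)) := by
    intro x z t
    linear_combination (-I) * hnls1 x z t + pz ψ x z t * Complex.I_sq
  have hzφ : ∀ x z t, pz φ x z t
      = -I * (px (px φ) x z t - 2 * (ψ x z t * φ x z t * φ x z t)) := by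
    intro x z t
    linear_combination (-I) * hnls2 x z t + pz φ x z t * Complex.I_sq
  -- t-derivatives from mKdV
  have htψ : ∀ x z t, pt ψ x z t
      = -(px (px (px ψ)) x z t) + 6 * (ψ x z t * φ x z t * px ψ x z t) := by
    intro x z t
    linear_combination hmkdv1 x z t
  have htφ : ∀ x z t, pt φ x z t
      = -(px (px (px φ)) x z t) + 6 * (ψ x z t * φ x z t * px φ x z t) := by
    intro x z t
    linear_combination hmkdv2 x z t
  -- pz of px ψ
  have hzψ1 : ∀ x z t, pz (px ψ) x z t
      = I * (px (px (px ψ)) x z t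
        - 2 * (px ψ x z t * ψ x z t * φ x z t + ψ x z t * px ψ x z t * φ x z t
          + ψ x z t * ψ x z t * px φ x z t)) := by
    intro x z t
    have H : HasDerivAt
        (fun x' => I * (px (px ψ) x' z t - 2 * (ψ x' z t * ψ x' z t * φ x' z t)))
        (I * (px (px (px ψ)) x z t
          - 2 * ((px ψ x z t * ψ x z t + ψ x z t * px ψ x z t) * φ x z t
            + ψ x z t * ψ x z t * px φ x z t))) x :=
      (((hasDerivAt_slice_x Sψ2 x z t).sub
        ((((hasDerivAt_slice_x hψ x z t).mul (hasDerivAt_slice_x hψ x z t)).mul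
          (hasDerivAt_slice_x hφ x z t)).const_mul 2)).const_mul I)
    have e := (pz_px_swap hψ x z t).trans
      ((px_congr (f := pz ψ)
        (g := fun x z t => I * (px (px ψ) x z t - 2 * (ψ x z t * ψ x z t * φ x z t)))
        hzψ x z t).trans H.deriv)
    rw [e]; ring
  have hzφ1 : ∀ x z t, pz (px φ) x z t
      = -I * (px (px (px φ)) x z t
        - 2 * (px ψ x z t * φ x z t * φ x z t + ψ x z t * px φ x z t * φ x z t
          + ψ x z t * φ x z t * px φ x z t)) := by
    intro x z t
    have H : HasDerivAt
        (fun x' => -I * (px (px φ) x' z t - 2 * (ψ x' z t * φ x' z t * φ x' z t)))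
        (-I * (px (px (px φ)) x z t
          - 2 * ((px ψ x z t * φ x z t + ψ x z t * px φ x z t) * φ x z t
            + ψ x z t * φ x z t * px φ x z t))) x :=
      (((hasDerivAt_slice_x Sφ2 x z t).sub
        ((((hasDerivAt_slice_x hψ x z t).mul (hasDerivAt_slice_x hφ x z t)).mul
          (hasDerivAt_slice_x hφ x z t)).const_mul 2)).const_mul (-I))
    have e := (pz_px_swap hφ x z t).trans
      ((px_congr (f := pz φ)
        (g := fun x z t => -I * (px (px φ) x z t - 2 * (ψ x z t * φ x z t * φ x z t)))
        hzφ x z t).trans H.deriv)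
    rw [e]; ring
  -- pz of px (px ψ)
  have hzψ2 : ∀ x z t, pz (px (px ψ)) x z t
      = I * (px (px (px (px ψ))) x z t
        - 2 * (2 * (ψ x z t * px (px ψ) x z t * φ x z t)
          + 2 * (px ψ x z t * px ψ x z t * φ x z t)
          + 4 * (ψ x z t * px ψ x z t * px φ x z t)
          + ψ x z t * ψ x z t * px (px φ) x z t)) := by
    intro x z t
    have Ta := ((hasDerivAt_slice_x Sψ1 x z t).mul (hasDerivAt_slice_x hψ x z t)).mul
      (hasDerivAt_slice_x hφ x z t)
    have Tb := ((hasDerivAt_slice_x hψ x z t).mul (hasDerivAt_slice_x Sψ1 x z t)).mul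
      (hasDerivAt_slice_x hφ x z t)
    have Tc := ((hasDerivAt_slice_x hψ x z t).mul (hasDerivAt_slice_x hψ x z t)).mul
      (hasDerivAt_slice_x Sφ1 x z t)
    have H := ((hasDerivAt_slice_x Sψ3 x z t).sub
      (((Ta.add Tb).add Tc).const_mul 2)).const_mul I
    have e := (pz_px_swap Sψ1 x z t).trans
      ((px_congr (f := pz (px ψ))
        (g := fun x z t => I * (px (px (px ψ)) x z t
          - 2 * (px ψ x z t * ψ x z t * φ x z t + ψ x z t * px ψ x z t * φ x z t
            + ψ x z t * ψ x z t * px φ x z t)))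
        hzψ1 x z t).trans H.deriv)
    rw [e]; simp only [Pi.mul_apply]; ring
  have hzφ2 : ∀ x z t, pz (px (px φ)) x z t
      = -I * (px (px (px (px φ))) x z t
        - 2 * (px (px ψ) x z t * φ x z t * φ x z t
          + 4 * (px ψ x z t * φ x z t * px φ x z t)
          + 2 * (ψ x z t * px φ x z t * px φ x z t)
          + 2 * (ψ x z t * φ x z t * px (px φ) x z t))) := by
    intro x z t
    have Ta := ((hasDerivAt_slice_x Sψ1 x z t).mul (hasDerivAt_slice_x hφ x z t)).mul
      (hasDerivAt_slice_x hφ x z t)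
    have Tb := ((hasDerivAt_slice_x hψ x z t).mul (hasDerivAt_slice_x Sφ1 x z t)).mul
      (hasDerivAt_slice_x hφ x z t)
    have Tc := ((hasDerivAt_slice_x hψ x z t).mul (hasDerivAt_slice_x hφ x z t)).mul
      (hasDerivAt_slice_x Sφ1 x z t)
    have H := ((hasDerivAt_slice_x Sφ3 x z t).sub
      (((Ta.add Tb).add Tc).const_mul 2)).const_mul (-I)
    have e := (pz_px_swap Sφ1 x z t).trans
      ((px_congr (f := pz (px φ))
        (g := fun x z t => -I * (px (px (px φ)) x z t
          - 2 * (px ψ x z t * φ x z t * φ x z t + ψ x z t * px φ x z t * φ x z t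
            + ψ x z t * φ x z t * px φ x z t)))
        hzφ1 x z t).trans H.deriv)
    rw [e]; simp only [Pi.mul_apply]; ring
  -- pz u
  have hpzu : ∀ x z t, pz u x z t
      = -(2 * I) * (px (px ψ) x z t * φ x z t - ψ x z t * px (px φ) x z t) := by
    intro x z t
    have H := ((hasDerivAt_slice_z hψ x z t).const_mul (-2 : ℂ)).mul
      (hasDerivAt_slice_z hφ x z t)
    have e := (pz_congr (f := u) (g := fun x z t => -2 * ψ x z t * φ x z t)
      hu x z t).trans H.deriv
    rw [e, hzψ x z t, hzφ x z t]; ring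
  -- pz (pz u)
  have hL : ∀ x z t, 2 * pz (pz u) x z t
      = 4 * (px (px (px (px ψ))) x z t * φ x z t + ψ x z t * px (px (px (px φ))) x z t
        - 2 * (px (px ψ) x z t * px (px φ) x z t)
        - 4 * (ψ x z t * px (px ψ) x z t * φ x z t * φ x z t)
        - 4 * (ψ x z t * ψ x z t * φ x z t * px (px φ) x z t)
        - 4 * (px ψ x z t * px ψ x z t * φ x z t * φ x z t)
        - 4 * (ψ x z t * ψ x z t * px φ x z t * px φ x z t)
        - 16 * (ψ x z t * px ψ x z t * φ x z t * px φ x z t)) := by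
    intro x z t
    have H := (((hasDerivAt_slice_z Sψ2 x z t).mul (hasDerivAt_slice_z hφ x z t)).sub
      ((hasDerivAt_slice_z hψ x z t).mul (hasDerivAt_slice_z Sφ2 x z t))).const_mul
      (-(2 * I))
    have e := (pz_congr (f := pz u)
      (g := fun x z t => -(2 * I) * (px (px ψ) x z t * φ x z t
        - ψ x z t * px (px φ) x z t)) hpzu x z t).trans H.deriv
    rw [e, hzψ2 x z t, hzφ x z t, hzψ x z t, hzφ2 x z t]
    have hI : (I : ℂ) * I = -1 := Complex.I_mul_I
    linear_combination (-4 : ℂ) *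
      ((px (px (px (px ψ))) x z t
          - 2 * (2 * (ψ x z t * px (px ψ) x z t * φ x z t)
            + 2 * (px ψ x z t * px ψ x z t * φ x z t)
            + 4 * (ψ x z t * px ψ x z t * px φ x z t)
            + ψ x z t * ψ x z t * px (px φ) x z t)) * φ x z t
        - px (px ψ) x z t * (px (px φ) x z t - 2 * (ψ x z t * φ x z t * φ x z t))
        - (px (px ψ) x z t - 2 * (ψ x z t * ψ x z t * φ x z t)) * px (px φ) x z t
        + ψ x z t * (px (px (px (px φ))) x z t
          - 2 * (px (px ψ) x z t * φ x z t * φ x z t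
            + 4 * (px ψ x z t * φ x z t * px φ x z t)
            + 2 * (ψ x z t * px φ x z t * px φ x z t)
            + 2 * (ψ x z t * φ x z t * px (px φ) x z t)))) * hI
  -- pt u
  have hptu : ∀ x z t, pt u x z t
      = 2 * (px (px (px ψ)) x z t * φ x z t) + 2 * (ψ x z t * px (px (px φ)) x z t)
        - 12 * (ψ x z t * px ψ x z t * φ x z t * φ x z t)
        - 12 * (ψ x z t * ψ x z t * φ x z t * px φ x z t) := by
    intro x z t
    have H := ((hasDerivAt_slice_t hψ x z t).const_mul (-2 : ℂ)).mul
      (hasDerivAt_slice_t hφ x z t)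
    have e := (pt_congr (f := u) (g := fun x z t => -2 * ψ x z t * φ x z t)
      hu x z t).trans H.deriv
    rw [e, htψ x z t, htφ x z t]; ring
  -- px u and higher
  have hux : ∀ x z t, px u x z t
      = -2 * (px ψ x z t * φ x z t) - 2 * (ψ x z t * px φ x z t) := by
    intro x z t
    have H := ((hasDerivAt_slice_x hψ x z t).const_mul (-2 : ℂ)).mul
      (hasDerivAt_slice_x hφ x z t)
    have e := (px_congr (f := u) (g := fun x z t => -2 * ψ x z t * φ x z t)
      hu x z t).trans H.deriv
    rw [e]; ring
  have hux2 : ∀ x z t, px (px u) x z t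
      = -2 * (px (px ψ) x z t * φ x z t) - 4 * (px ψ x z t * px φ x z t)
        - 2 * (ψ x z t * px (px φ) x z t) := by
    intro x z t
    have H := ((((hasDerivAt_slice_x Sψ1 x z t).mul
        (hasDerivAt_slice_x hφ x z t)).const_mul (-2 : ℂ)).sub
      (((hasDerivAt_slice_x hψ x z t).mul
        (hasDerivAt_slice_x Sφ1 x z t)).const_mul (2 : ℂ)))
    have e := (px_congr (f := px u)
      (g := fun x z t => -2 * (px ψ x z t * φ x z t) - 2 * (ψ x z t * px φ x z t))
      hux x z t).trans H.deriv
    rw [e]; ring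
  have hux3 : ∀ x z t, px (px (px u)) x z t
      = -2 * (px (px (px ψ)) x z t * φ x z t) - 6 * (px (px ψ) x z t * px φ x z t)
        - 6 * (px ψ x z t * px (px φ) x z t) - 2 * (ψ x z t * px (px (px φ)) x z t) := by
    intro x z t
    have H := (((((hasDerivAt_slice_x Sψ2 x z t).mul
        (hasDerivAt_slice_x hφ x z t)).const_mul (-2 : ℂ)).sub
      (((hasDerivAt_slice_x Sψ1 x z t).mul
        (hasDerivAt_slice_x Sφ1 x z t)).const_mul (4 : ℂ))).sub
      (((hasDerivAt_slice_x hψ x z t).mul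
        (hasDerivAt_slice_x Sφ2 x z t)).const_mul (2 : ℂ)))
    have e := (px_congr (f := px (px u))
      (g := fun x z t => -2 * (px (px ψ) x z t * φ x z t) - 4 * (px ψ x z t * px φ x z t)
        - 2 * (ψ x z t * px (px φ) x z t)) hux2 x z t).trans H.deriv
    rw [e]; ring
  -- the RHS integrand simplified
  have hG : ∀ x z t, 4 * pt u x z t + px (px (px u)) x z t + 6 * u x z t * px u x z t
      = 6 * (px (px (px ψ)) x z t * φ x z t) + 6 * (ψ x z t * px (px (px φ)) x z t)
        - 6 * (px (px ψ) x z t * px φ x z t) - 6 * (px ψ x z t * px (px φ) x z t)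
        - 24 * (ψ x z t * ψ x z t * φ x z t * px φ x z t)
        - 24 * (ψ x z t * px ψ x z t * φ x z t * φ x z t) := by
    intro x z t
    rw [hptu x z t, hux3 x z t, hu x z t, hux x z t]; ring
  intro x z t
  have T1 := ((hasDerivAt_slice_x Sψ3 x z t).mul (hasDerivAt_slice_x hφ x z t)).const_mul (6 : ℂ)
  have T2 := ((hasDerivAt_slice_x hψ x z t).mul (hasDerivAt_slice_x Sφ3 x z t)).const_mul (6 : ℂ)
  have T3 := ((hasDerivAt_slice_x Sψ2 x z t).mul (hasDerivAt_slice_x Sφ1 x z t)).const_mul (6 : ℂ)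
  have T4 := ((hasDerivAt_slice_x Sψ1 x z t).mul (hasDerivAt_slice_x Sφ2 x z t)).const_mul (6 : ℂ)
  have T5 := ((((hasDerivAt_slice_x hψ x z t).mul (hasDerivAt_slice_x hψ x z t)).mul
      (hasDerivAt_slice_x hφ x z t)).mul (hasDerivAt_slice_x Sφ1 x z t)).const_mul (24 : ℂ)
  have T6 := ((((hasDerivAt_slice_x hψ x z t).mul (hasDerivAt_slice_x Sψ1 x z t)).mul
      (hasDerivAt_slice_x hφ x z t)).mul (hasDerivAt_slice_x hφ x z t)).const_mul (24 : ℂ)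
  have H3 := ((((T1.add T2).sub T3).sub T4).sub T5).sub T6
  have hR := (px_congr
    (f := fun x z t => 4 * pt u x z t + px (px (px u)) x z t
      + 6 * u x z t * px u x z t)
    (g := fun x z t => 6 * (px (px (px ψ)) x z t * φ x z t)
      + 6 * (ψ x z t * px (px (px φ)) x z t)
      - 6 * (px (px ψ) x z t * px φ x z t) - 6 * (px ψ x z t * px (px φ) x z t)
      - 24 * (ψ x z t * ψ x z t * φ x z t * px φ x z t)
      - 24 * (ψ x z t * px ψ x z t * φ x z t * φ x z t))
    hG x z t).trans H3.deriv
  rw [hR]; simp only [Pi.mul_apply]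
  have e := hL x z t
  linear_combination (3 : ℂ) / 2 * e
end

section
/- Let ψ, φ : ℝ³ → ℂ be smooth solutions of both the coupled NLS system and the coupled mKdV system (as above). Then ψ and φ satisfy the coupled modified two-dimensional NLS system in cone coordinates: i ψ_t + ψ_xz + 2i(ψφ_x − φψ_x)ψ = 0 and i φ_t − φ_xz + 2i(φψ_x − ψφ_x)φ = 0. -/
open Complex

noncomputable def DD (v : ℝ × ℝ × ℝ) (F : ℝ × ℝ × ℝ → ℂ) : ℝ × ℝ × ℝ → ℂ :=
  fun p => fderiv ℝ F p v

lemma contDiff_DD {F : ℝ × ℝ × ℝ → ℂ} (hF : ContDiff ℝ (⊤ : ℕ∞) F) (v : ℝ × ℝ × ℝ) :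
    ContDiff ℝ (⊤ : ℕ∞) (DD v F) :=
  (ContinuousLinearMap.apply ℝ ℂ v).contDiff.comp (hF.fderiv_right (by simp))

lemma DD_comm {F : ℝ × ℝ × ℝ → ℂ} (hF : ContDiff ℝ (⊤ : ℕ∞) F) (v w p : ℝ × ℝ × ℝ) :
    DD v (DD w F) p = DD w (DD v F) p := by
  have hdd : HasFDerivAt (fderiv ℝ F) (fderiv ℝ (fderiv ℝ F) p) p :=
    ((hF.fderiv_right (m := (⊤ : ℕ∞)) (by simp)).differentiable (by simp) p).hasFDerivAt
  have h1 : HasFDerivAt (DD w F)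
      ((ContinuousLinearMap.apply ℝ ℂ w).comp (fderiv ℝ (fderiv ℝ F) p)) p :=
    (ContinuousLinearMap.apply ℝ ℂ w).hasFDerivAt.comp p hdd
  have h2 : HasFDerivAt (DD v F)
      ((ContinuousLinearMap.apply ℝ ℂ v).comp (fderiv ℝ (fderiv ℝ F) p)) p :=
    (ContinuousLinearMap.apply ℝ ℂ v).hasFDerivAt.comp p hdd
  have hsym := second_derivative_symmetric
    (fun y => (hF.differentiable (by simp) y).hasFDerivAt) hdd v w
  calc DD v (DD w F) p = fderiv ℝ (DD w F) p v := rfl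
    _ = fderiv ℝ (fderiv ℝ F) p v w := by rw [h1.fderiv]; rfl
    _ = fderiv ℝ (fderiv ℝ F) p w v := hsym
    _ = fderiv ℝ (DD v F) p w := by rw [h2.fderiv]; rfl
    _ = DD w (DD v F) p := rfl

lemma hasDerivAt_fst {G : ℝ × ℝ × ℝ → ℂ} (hG : Differentiable ℝ G) (x z t : ℝ) :
    HasDerivAt (fun x' => G (x', z, t)) (DD (1, 0, 0) G (x, z, t)) x := by
  have h1 : HasDerivAt (fun x' : ℝ => ((x', z, t) : ℝ × ℝ × ℝ)) (1, 0, 0) x := by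
    have h := (((hasDerivAt_id x).smul_const (((1:ℝ), (0:ℝ), (0:ℝ)) : ℝ × ℝ × ℝ)).const_add
      (((0:ℝ), z, t) : ℝ × ℝ × ℝ))
    simpa [Prod.ext_iff] using h
  exact (hG (x, z, t)).hasFDerivAt.comp_hasDerivAt x h1

lemma hasDerivAt_snd {G : ℝ × ℝ × ℝ → ℂ} (hG : Differentiable ℝ G) (x z t : ℝ) :
    HasDerivAt (fun z' => G (x, z', t)) (DD (0, 1, 0) G (x, z, t)) z := by
  have h1 : HasDerivAt (fun z' : ℝ => ((x, z', t) : ℝ × ℝ × ℝ)) (0, 1, 0) z := by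
    have h := (((hasDerivAt_id z).smul_const (((0:ℝ), (1:ℝ), (0:ℝ)) : ℝ × ℝ × ℝ)).const_add
      ((x, (0:ℝ), t) : ℝ × ℝ × ℝ))
    simpa [Prod.ext_iff] using h
  exact (hG (x, z, t)).hasFDerivAt.comp_hasDerivAt z h1

lemma hasDerivAt_trd {G : ℝ × ℝ × ℝ → ℂ} (hG : Differentiable ℝ G) (x z t : ℝ) :
    HasDerivAt (fun t' => G (x, z, t')) (DD (0, 0, 1) G (x, z, t)) t := by
  have h1 : HasDerivAt (fun t' : ℝ => ((x, z, t') : ℝ × ℝ × ℝ)) (0, 0, 1) t := by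
    have h := (((hasDerivAt_id t).smul_const (((0:ℝ), (0:ℝ), (1:ℝ)) : ℝ × ℝ × ℝ)).const_add
      ((x, z, (0:ℝ)) : ℝ × ℝ × ℝ))
    simpa [Prod.ext_iff] using h
  exact (hG (x, z, t)).hasFDerivAt.comp_hasDerivAt t h1

lemma px_rep {g : ℝ → ℝ → ℝ → ℂ} {G : ℝ × ℝ × ℝ → ℂ} (hG : Differentiable ℝ G)
    (hg : ∀ x z t, g x z t = G (x, z, t)) (x z t : ℝ) :
    px g x z t = DD (1, 0, 0) G (x, z, t) := by
  unfold px
  rw [show (fun x' => g x' z t) = fun x' => G (x', z, t) from funext fun x' => hg x' z t]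
  exact (hasDerivAt_fst hG x z t).deriv

lemma pz_rep {g : ℝ → ℝ → ℝ → ℂ} {G : ℝ × ℝ × ℝ → ℂ} (hG : Differentiable ℝ G)
    (hg : ∀ x z t, g x z t = G (x, z, t)) (x z t : ℝ) :
    pz g x z t = DD (0, 1, 0) G (x, z, t) := by
  unfold pz
  rw [show (fun z' => g x z' t) = fun z' => G (x, z', t) from funext fun z' => hg x z' t]
  exact (hasDerivAt_snd hG x z t).deriv

lemma pt_rep {g : ℝ → ℝ → ℝ → ℂ} {G : ℝ × ℝ × ℝ → ℂ} (hG : Differentiable ℝ G)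
    (hg : ∀ x z t, g x z t = G (x, z, t)) (x z t : ℝ) :
    pt g x z t = DD (0, 0, 1) G (x, z, t) := by
  unfold pt
  rw [show (fun t' => g x z t') = fun t' => G (x, z, t') from funext fun t' => hg x z t']
  exact (hasDerivAt_trd hG x z t).deriv
theorem cone_mnls_from_coupled_nls_mkdv
    (ψ φ : ℝ → ℝ → ℝ → ℂ)
    (hψ : ContDiff ℝ (⊤ : ℕ∞) (fun p : ℝ × ℝ × ℝ => ψ p.1 p.2.1 p.2.2))
    (hφ : ContDiff ℝ (⊤ : ℕ∞) (fun p : ℝ × ℝ × ℝ => φ p.1 p.2.1 p.2.2))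
    (hnls1 : ∀ x z t, I * pz ψ x z t + px (px ψ) x z t
      - 2 * (ψ x z t)^2 * φ x z t = 0)
    (hnls2 : ∀ x z t, I * pz φ x z t - px (px φ) x z t
      + 2 * ψ x z t * (φ x z t)^2 = 0)
    (hmkdv1 : ∀ x z t, pt ψ x z t + px (px (px ψ)) x z t
      - 6 * ψ x z t * φ x z t * px ψ x z t = 0)
    (hmkdv2 : ∀ x z t, pt φ x z t + px (px (px φ)) x z t
      - 6 * ψ x z t * φ x z t * px φ x z t = 0) :
    (∀ x z t, I * pt ψ x z t + pz (px ψ) x z t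
      + 2 * I * (ψ x z t * px φ x z t - φ x z t * px ψ x z t) * ψ x z t = 0) ∧
    (∀ x z t, I * pt φ x z t - pz (px φ) x z t
      + 2 * I * (φ x z t * px ψ x z t - ψ x z t * px φ x z t) * φ x z t = 0) := by
  set F : ℝ × ℝ × ℝ → ℂ := fun p => ψ p.1 p.2.1 p.2.2 with hF
  set G : ℝ × ℝ × ℝ → ℂ := fun p => φ p.1 p.2.1 p.2.2 with hG
  have hFd : Differentiable ℝ F := hψ.differentiable (by simp)
  have hGd : Differentiable ℝ G := hφ.differentiable (by simp)
  have hF1 := contDiff_DD hψ (1, 0, 0)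
  have hF2 := contDiff_DD hψ (0, 1, 0)
  have hG1 := contDiff_DD hφ (1, 0, 0)
  have hG2 := contDiff_DD hφ (0, 1, 0)
  have hF11 := contDiff_DD hF1 (1, 0, 0)
  have hG11 := contDiff_DD hG1 (1, 0, 0)
  -- representations
  have rψx : ∀ x z t, px ψ x z t = DD (1,0,0) F (x, z, t) :=
    px_rep hFd (fun _ _ _ => rfl)
  have rψz : ∀ x z t, pz ψ x z t = DD (0,1,0) F (x, z, t) :=
    pz_rep hFd (fun _ _ _ => rfl)
  have rψt : ∀ x z t, pt ψ x z t = DD (0,0,1) F (x, z, t) :=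
    pt_rep hFd (fun _ _ _ => rfl)
  have rψxx : ∀ x z t, px (px ψ) x z t = DD (1,0,0) (DD (1,0,0) F) (x, z, t) :=
    px_rep (hF1.differentiable (by simp)) rψx
  have rψxxx : ∀ x z t, px (px (px ψ)) x z t
      = DD (1,0,0) (DD (1,0,0) (DD (1,0,0) F)) (x, z, t) :=
    px_rep (hF11.differentiable (by simp)) rψxx
  have rψzx : ∀ x z t, pz (px ψ) x z t = DD (0,1,0) (DD (1,0,0) F) (x, z, t) :=
    pz_rep (hF1.differentiable (by simp)) rψx
  have rφx : ∀ x z t, px φ x z t = DD (1,0,0) G (x, z, t) :=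
    px_rep hGd (fun _ _ _ => rfl)
  have rφz : ∀ x z t, pz φ x z t = DD (0,1,0) G (x, z, t) :=
    pz_rep hGd (fun _ _ _ => rfl)
  have rφt : ∀ x z t, pt φ x z t = DD (0,0,1) G (x, z, t) :=
    pt_rep hGd (fun _ _ _ => rfl)
  have rφxx : ∀ x z t, px (px φ) x z t = DD (1,0,0) (DD (1,0,0) G) (x, z, t) :=
    px_rep (hG1.differentiable (by simp)) rφx
  have rφxxx : ∀ x z t, px (px (px φ)) x z t
      = DD (1,0,0) (DD (1,0,0) (DD (1,0,0) G)) (x, z, t) :=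
    px_rep (hG11.differentiable (by simp)) rφxx
  have rφzx : ∀ x z t, pz (px φ) x z t = DD (0,1,0) (DD (1,0,0) G) (x, z, t) :=
    pz_rep (hG1.differentiable (by simp)) rφx
  constructor
  · intro x z t
    -- mkdv identity at the point
    have eq1 := hmkdv1 x z t
    rw [rψt, rψxxx, rψx] at eq1
    -- differentiate nls1 in x
    have hzero : ∀ x', I * DD (0,1,0) F (x', z, t) + DD (1,0,0) (DD (1,0,0) F) (x', z, t)
        - 2 * (ψ x' z t)^2 * φ x' z t = 0 := by
      intro x'
      have h := hnls1 x' z t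
      rw [rψz, rψxx] at h
      exact h
    have hψx : HasDerivAt (fun x' => ψ x' z t) (DD (1,0,0) F (x, z, t)) x :=
      hasDerivAt_fst hFd x z t
    have hφx : HasDerivAt (fun x' => φ x' z t) (DD (1,0,0) G (x, z, t)) x :=
      hasDerivAt_fst hGd x z t
    have H : HasDerivAt (fun x' => I * DD (0,1,0) F (x', z, t)
        + DD (1,0,0) (DD (1,0,0) F) (x', z, t) - 2 * (ψ x' z t)^2 * φ x' z t)
        (I * DD (1,0,0) (DD (0,1,0) F) (x, z, t)
          + DD (1,0,0) (DD (1,0,0) (DD (1,0,0) F)) (x, z, t)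
          - ((2 * (DD (1,0,0) F (x, z, t) * ψ x z t + ψ x z t * DD (1,0,0) F (x, z, t)))
              * φ x z t
            + (2 * (ψ x z t)^2) * DD (1,0,0) G (x, z, t))) x := by
      have hsq : HasDerivAt (fun x' => ψ x' z t * ψ x' z t) _ x := hψx.mul hψx
      rw [show (fun x' => ψ x' z t * ψ x' z t) = fun x' => (ψ x' z t)^2 from
        funext fun x' => (pow_two (ψ x' z t)).symm] at hsq
      exact (((hasDerivAt_fst (hF2.differentiable (by simp)) x z t).const_mul I).add
        (hasDerivAt_fst (hF11.differentiable (by simp)) x z t)).sub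
        ((hsq.const_mul 2).mul hφx)
    have H0 : HasDerivAt (fun x' => I * DD (0,1,0) F (x', z, t)
        + DD (1,0,0) (DD (1,0,0) F) (x', z, t) - 2 * (ψ x' z t)^2 * φ x' z t) 0 x := by
      rw [show (fun x' => I * DD (0,1,0) F (x', z, t)
        + DD (1,0,0) (DD (1,0,0) F) (x', z, t) - 2 * (ψ x' z t)^2 * φ x' z t)
        = fun _ => (0:ℂ) from funext hzero]
      exact hasDerivAt_const x 0
    have heq := H.unique H0
    push_cast at heq
    rw [rψt, rψzx, rψx, rφx, DD_comm hψ (0,1,0) (1,0,0) (x, z, t)]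
    linear_combination I * eq1 - I * heq
      + DD (1,0,0) (DD (0,1,0) F) (x, z, t) * Complex.I_mul_I
  · intro x z t
    have eq1 := hmkdv2 x z t
    rw [rφt, rφxxx, rφx] at eq1
    have hzero : ∀ x', I * DD (0,1,0) G (x', z, t) - DD (1,0,0) (DD (1,0,0) G) (x', z, t)
        + 2 * ψ x' z t * (φ x' z t)^2 = 0 := by
      intro x'
      have h := hnls2 x' z t
      rw [rφz, rφxx] at h
      exact h
    have hψx : HasDerivAt (fun x' => ψ x' z t) (DD (1,0,0) F (x, z, t)) x :=
      hasDerivAt_fst hFd x z t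
    have hφx : HasDerivAt (fun x' => φ x' z t) (DD (1,0,0) G (x, z, t)) x :=
      hasDerivAt_fst hGd x z t
    have H : HasDerivAt (fun x' => I * DD (0,1,0) G (x', z, t)
        - DD (1,0,0) (DD (1,0,0) G) (x', z, t) + 2 * ψ x' z t * (φ x' z t)^2)
        (I * DD (1,0,0) (DD (0,1,0) G) (x, z, t)
          - DD (1,0,0) (DD (1,0,0) (DD (1,0,0) G)) (x, z, t)
          + ((2 * DD (1,0,0) F (x, z, t)) * (φ x z t)^2
            + (2 * ψ x z t) * (DD (1,0,0) G (x, z, t) * φ x z t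
              + φ x z t * DD (1,0,0) G (x, z, t)))) x := by
      have hsq : HasDerivAt (fun x' => φ x' z t * φ x' z t) _ x := hφx.mul hφx
      rw [show (fun x' => φ x' z t * φ x' z t) = fun x' => (φ x' z t)^2 from
        funext fun x' => (pow_two (φ x' z t)).symm] at hsq
      exact (((hasDerivAt_fst (hG2.differentiable (by simp)) x z t).const_mul I).sub
        (hasDerivAt_fst (hG11.differentiable (by simp)) x z t)).add
        ((hψx.const_mul 2).mul hsq)
    have H0 : HasDerivAt (fun x' => I * DD (0,1,0) G (x', z, t)
        - DD (1,0,0) (DD (1,0,0) G) (x', z, t) + 2 * ψ x' z t * (φ x' z t)^2) 0 x := by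
      rw [show (fun x' => I * DD (0,1,0) G (x', z, t)
        - DD (1,0,0) (DD (1,0,0) G) (x', z, t) + 2 * ψ x' z t * (φ x' z t)^2)
        = fun _ => (0:ℂ) from funext hzero]
      exact hasDerivAt_const x 0
    have heq := H.unique H0
    push_cast at heq
    rw [rφt, rφzx, rψx, rφx, DD_comm hφ (0,1,0) (1,0,0) (x, z, t)]
    linear_combination I * eq1 + I * heq
      - DD (1,0,0) (DD (0,1,0) G) (x, z, t) * Complex.I_mul_I
end

section
/- For λ₀ ∈ ℂ, 0 < a < b and π/4 < φ < π/2, define the polynomial F(λ) = ((λ−λ₀)⁴ − 2a²(λ−λ₀)²cos 2φ + a⁴)((λ−λ₀)⁴ − 2b²(λ−λ₀)²cos 2φ + b⁴). Then the map (χ, λ) ↦ (a²b²(λ−λ₀)⁻⁴ χ, λ₀ + ab(λ−λ₀)⁻¹) maps solutions of χ² = F(λ) with λ ≠ λ₀ to solutions of the same equation; i.e., setting λ' = λ₀ + ab/(λ−λ₀) and χ' = a²b²χ/(λ−λ₀)⁴, one has (χ')² = F(λ'). Moreover this map is an involution on the set {(χ,λ) : χ² = F(λ), λ ≠ λ₀}.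 -/
open Complex

/-- The degree-8 polynomial defining the genus-3 spectral curve Γ₃. -/
noncomputable def curvePoly (lam0 : ℂ) (a b φ : ℝ) (l : ℂ) : ℂ :=
  ((l - lam0) ^ 4 - 2 * (a : ℂ) ^ 2 * (l - lam0) ^ 2 * Real.cos (2 * φ) + (a : ℂ) ^ 4) *
  ((l - lam0) ^ 4 - 2 * (b : ℂ) ^ 2 * (l - lam0) ^ 2 * Real.cos (2 * φ) + (b : ℂ) ^ 4)

/-!
Writing `d = λ - λ₀` and `Q_s(d) = d⁴ - 2 s² d² cos 2φ + s⁴`, we have `F = Q_a · Q_b`, and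
`Q_s(d)` is symmetric in `s` and `d` and homogeneous of degree 4. Hence the substitution
`d ↦ ab/d` exchanges the two factors up to the scalars `a⁴/d⁴` and `b⁴/d⁴`, so
`F(λ') = (ab)⁴ d⁻⁸ F(λ)`, which is exactly `χ'² / χ²`.
-/

section Field

variable {K : Type*} [Field K]

def quarticFactor (c s d : K) : K :=
  d ^ 4 - 2 * s ^ 2 * d ^ 2 * c + s ^ 4

theorem quarticFactor_div (c a b : K) {d : K} (hd : d ≠ 0) :
    quarticFactor c a (a * b / d) = a ^ 4 / d ^ 4 * quarticFactor c b d := by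
  unfold quarticFactor
  field_simp
  ring

theorem add_div_sub_ne {z₀ k z : K} (hk : k ≠ 0) (hz : z ≠ z₀) : z₀ + k / (z - z₀) ≠ z₀ := by
  simpa using div_ne_zero hk (sub_ne_zero.mpr hz)

theorem add_div_sub_involutive {z₀ k : K} (hk : k ≠ 0) (z : K) :
    z₀ + k / (z₀ + k / (z - z₀) - z₀) = z := by
  rw [add_sub_cancel_left, div_div_cancel₀ hk]
  ring

end Field

theorem curvePoly_eq_mul_quarticFactor (lam0 : ℂ) (a b φ : ℝ) (l : ℂ) :
    curvePoly lam0 a b φ l =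
      quarticFactor (Real.cos (2 * φ) : ℂ) a (l - lam0) *
        quarticFactor (Real.cos (2 * φ) : ℂ) b (l - lam0) :=
  rfl

theorem curvePoly_add_div_sub (lam0 : ℂ) (a b φ : ℝ) {l : ℂ} (hl : l ≠ lam0) :
    curvePoly lam0 a b φ (lam0 + a * b / (l - lam0)) =
      ((a : ℂ) * b) ^ 4 / (l - lam0) ^ 8 * curvePoly lam0 a b φ l := by
  have hd : l - lam0 ≠ 0 := sub_ne_zero.mpr hl
  have hb_mul_a : (a : ℂ) * b / (l - lam0) = b * a / (l - lam0) := by ring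
  rw [curvePoly_eq_mul_quarticFactor, curvePoly_eq_mul_quarticFactor, add_sub_cancel_left,
    quarticFactor_div _ _ _ hd, hb_mul_a, quarticFactor_div _ _ _ hd]
  field_simp

theorem tau3_involution_general
    (lam0 : ℂ) (a b φ : ℝ) (ha : 0 < a) (hab : a < b) :
    ∀ χ l : ℂ, χ ^ 2 = curvePoly lam0 a b φ l → l ≠ lam0 →
      let l' := lam0 + (a : ℂ) * b / (l - lam0)
      let χ' := (a : ℂ) ^ 2 * (b : ℂ) ^ 2 * χ / (l - lam0) ^ 4
      χ' ^ 2 = curvePoly lam0 a b φ l' ∧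
      l' ≠ lam0 ∧
      lam0 + (a : ℂ) * b / (l' - lam0) = l ∧
      (a : ℂ) ^ 2 * (b : ℂ) ^ 2 * χ' / (l' - lam0) ^ 4 = χ := by
  intro χ l hχ hl l' χ'
  have hab0 : (a : ℂ) * b ≠ 0 :=
    mul_ne_zero (ofReal_ne_zero.mpr ha.ne') (ofReal_ne_zero.mpr (ha.trans hab).ne')
  refine ⟨?_, add_div_sub_ne hab0 hl, add_div_sub_involutive hab0 l, ?_⟩
  · rw [curvePoly_add_div_sub lam0 a b φ hl, ← hχ]
    simp only [χ']
    field_simp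
  · simp only [χ', l', add_sub_cancel_left]
    field_simp
    exact mul_div_cancel_left₀ χ hab0

theorem tau3_involution
    (lam0 : ℂ) (a b φ : ℝ) (ha : 0 < a) (hab : a < b)
    (hφ₁ : Real.pi / 4 < φ) (hφ₂ : φ < Real.pi / 2) :
    ∀ χ l : ℂ, χ ^ 2 = curvePoly lam0 a b φ l → l ≠ lam0 →
      let l' := lam0 + (a : ℂ) * b / (l - lam0)
      let χ' := (a : ℂ) ^ 2 * (b : ℂ) ^ 2 * χ / (l - lam0) ^ 4
      χ' ^ 2 = curvePoly lam0 a b φ l' ∧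
      l' ≠ lam0 ∧
      lam0 + (a : ℂ) * b / (l' - lam0) = l ∧
      (a : ℂ) ^ 2 * (b : ℂ) ^ 2 * χ' / (l' - lam0) ^ 4 = χ :=
  tau3_involution_general lam0 a b φ ha hab
end
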